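/- arXiv:2310.09548 — 3 statements merged into one kernel-verified Lean document; each statement's English description precedes it below -/
import Mathlib

section
/- Every S_n-invariant subgroup V of K = (ℤ/2ℤ)^n is equal to one of the following four subgroups: the zero subgroup {0}, the whole group K, the two-element subgroup {0, e} generated by the all-ones vector e, or the hyperplane e^⊥ = {v ∈ K | v_1 + ⋯ + v_n = 0}. -/
/-!
If `V` contains a vector `v` that is neither `0` nor `e`, pick `v i = 1` and `v j = 0`; then
`v + (i j) • v = e_i + e_j ∈ V`, and moving `j` by transpositions that fix `i` puts every
`e_i + e_k` in `V`. These span `e^⊥`, which has index two, so `V` is `e^⊥` or `K`. Otherwise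
`V ⊆ {0, e}`.
-/

def IsPermInvariant {ι M : Type*} [AddGroup M] (V : AddSubgroup (ι → M)) : Prop :=
  ∀ σ : Equiv.Perm ι, ∀ v ∈ V, (fun i => v (σ⁻¹ i)) ∈ V

section SingleAddSingle

variable {ι : Type*} [DecidableEq ι] {V : AddSubgroup (ι → ZMod 2)}

-- `w = ∑ k, w k • (e_i + e_k)`, since the coefficient of `e_i` on the right is `∑ k, w k = 0`.
lemma mem_of_forall_single_add_single_mem [Fintype ι] {i : ι}
    (h : ∀ k, Pi.single i 1 + Pi.single k 1 ∈ V) {w : ι → ZMod 2} (hw : ∑ k, w k = 0) :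
    w ∈ V := by
  have hw_eq : w = ∑ k, w k • (Pi.single i 1 + Pi.single k 1) := by
    simp_rw [smul_add, Finset.sum_add_distrib, ← Finset.sum_smul, hw, zero_smul, zero_add,
      ← Pi.single_smul', smul_eq_mul, mul_one, Finset.univ_sum_single]
  rw [hw_eq]
  exact sum_mem fun k _ => ZMod.smul_mem (h k) (w k)

namespace IsPermInvariant

lemma single_add_single_mem (hV : IsPermInvariant V) {v : ι → ZMod 2} (hv : v ∈ V) {i j : ι}
    (hi : v i = 1) (hj : v j = 0) : Pi.single i 1 + Pi.single j 1 ∈ V := by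
  have hij : i ≠ j := by rintro rfl; simp [hi] at hj
  convert V.add_mem hv (hV (Equiv.swap i j) v hv) using 1
  funext k
  rcases eq_or_ne k i with rfl | hki
  · simp [hi, hj, hij]
  rcases eq_or_ne k j with rfl | hkj
  · simp [hi, hj, hki]
  simp [hki, hkj, Equiv.swap_apply_of_ne_of_ne, CharTwo.add_self_eq_zero]

lemma single_add_single_mem_of_ne (hV : IsPermInvariant V) {i j : ι} (hij : i ≠ j)
    (h : Pi.single i 1 + Pi.single j 1 ∈ V) (k : ι) : Pi.single i 1 + Pi.single k 1 ∈ V := by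
  rcases eq_or_ne k i with rfl | hki
  · simp [← Pi.single_add, CharTwo.add_self_eq_zero]
  convert hV (Equiv.swap j k) _ h using 1
  funext l
  simp only [Pi.add_apply, Equiv.swap_inv, Pi.single_apply, Equiv.swap_apply_def]
  split_ifs <;> grind

lemma mem_of_sum_eq_zero [Fintype ι] (hV : IsPermInvariant V) {v : ι → ZMod 2} (hv : v ∈ V)
    {i j : ι} (hi : v i = 1) (hj : v j = 0) {w : ι → ZMod 2} (hw : ∑ k, w k = 0) : w ∈ V :=
  mem_of_forall_single_add_single_mem (hV.single_add_single_mem_of_ne (by rintro rfl; simp_all)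
    (hV.single_add_single_mem hv hi hj)) hw

end IsPermInvariant

end SingleAddSingle

lemma exists_apply_eq_one_and_apply_eq_zero {ι : Type*} {v : ι → ZMod 2} (h0 : v ≠ 0)
    (h1 : v ≠ fun _ => 1) : ∃ i j, v i = 1 ∧ v j = 0 := by
  have two_values : ∀ a : ZMod 2, a = 0 ∨ a = 1 := by decide
  obtain ⟨i, hi⟩ := Function.ne_iff.1 h0
  obtain ⟨j, hj⟩ := Function.ne_iff.1 h1
  exact ⟨i, j, (two_values _).resolve_left hi, (two_values _).resolve_right hj⟩

namespace AddSubgroup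

variable {G : Type*} [AddGroup G] {V : AddSubgroup G}

lemma eq_bot_or_eq_closure_singleton {x : G} (h : ∀ v ∈ V, v = 0 ∨ v = x) :
    V = ⊥ ∨ V = closure {x} := by
  by_cases hx : x ∈ V
  · refine .inr (le_antisymm (fun v hv => ?_) ((closure_le V).2 (Set.singleton_subset_iff.2 hx)))
    rcases h v hv with rfl | rfl
    exacts [zero_mem _, subset_closure rfl]
  · refine .inl ((eq_bot_iff_forall _).2 fun v hv => ?_)
    rcases h v hv with rfl | rfl
    exacts [rfl, absurd hv hx]

lemma eq_ker_or_eq_top_of_ker_le {f : G →+ ZMod 2} (h : f.ker ≤ V) : V = f.ker ∨ V = ⊤ := by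
  refine or_iff_not_imp_left.2 fun hne => eq_top_iff.2 fun x _ => ?_
  obtain ⟨u, hu, hfu⟩ : ∃ u ∈ V, f u ≠ 0 := by
    by_contra! H
    exact hne (le_antisymm (fun u hu => H u hu) h)
  have eq_one : ∀ a : ZMod 2, a ≠ 0 → a = 1 := by decide
  rcases eq_or_ne (f x) 0 with hfx | hfx
  · exact h hfx
  · have hxu : x - u ∈ V := h (by simp [eq_one _ hfx, eq_one _ hfu])
    simpa using V.add_mem hxu hu

end AddSubgroup

theorem sn_invariant_subgroups_general (n : ℕ)
    (V : AddSubgroup (Fin n → ZMod 2))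
    (hV : ∀ σ : Equiv.Perm (Fin n), ∀ v ∈ V, (fun i => v (σ⁻¹ i)) ∈ V) :
    V = ⊥ ∨ V = ⊤ ∨
    V = AddSubgroup.closure {(fun _ => 1 : Fin n → ZMod 2)} ∨
    V = (∑ i : Fin n, Pi.evalAddMonoidHom (fun _ : Fin n => ZMod 2) i).ker := by
  by_cases hconst : ∀ v ∈ V, v = 0 ∨ v = fun _ => 1
  · rcases AddSubgroup.eq_bot_or_eq_closure_singleton hconst with h | h <;> simp [h]
  · push Not at hconst
    obtain ⟨v, hv, hv0, hv1⟩ := hconst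
    obtain ⟨i, j, hi, hj⟩ := exists_apply_eq_one_and_apply_eq_zero hv0 hv1
    have hker : (∑ i : Fin n, Pi.evalAddMonoidHom (fun _ : Fin n => ZMod 2) i).ker ≤ V :=
      fun w hw => IsPermInvariant.mem_of_sum_eq_zero hV hv hi hj (by simpa using hw)
    rcases AddSubgroup.eq_ker_or_eq_top_of_ker_le hker with h | h <;> simp [h]

/-- Every `S_n`-invariant subgroup `V` of `K = (ℤ/2ℤ)^n` equals one of:
the zero subgroup, the whole group, the two-element subgroup generated by the all-ones
vector `e`, or the hyperplane `e^⊥ = {v | v 1 + ⋯ + v n = 0}`. -/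
theorem sn_invariant_subgroups (n : ℕ) (hn : 1 ≤ n)
    (V : AddSubgroup (Fin n → ZMod 2))
    (hV : ∀ σ : Equiv.Perm (Fin n), ∀ v ∈ V, (fun i => v (σ⁻¹ i)) ∈ V) :
    V = ⊥ ∨ V = ⊤ ∨
    V = AddSubgroup.closure {(fun _ => 1 : Fin n → ZMod 2)} ∨
    V = (∑ i : Fin n, Pi.evalAddMonoidHom (fun _ : Fin n => ZMod 2) i).ker :=
  sn_invariant_subgroups_general n V hV
end

section
/- If an S_n-invariant subgroup V of K = (ℤ/2ℤ)^n contains a vector of the form e_i + e_j for some indices i ≠ j, then V contains the whole hyperplane e^⊥ = {v ∈ K | v_1 + ⋯ + v_n = 0}. -/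
/-- If an `S_n`-invariant subgroup `V` of `K = (ℤ/2ℤ)^n` contains a
vector of the form `e_i + e_j` with `i ≠ j`, then `V` contains the whole hyperplane
`e^⊥ = {v | v 1 + ⋯ + v n = 0}`. -/
theorem sn_invariant_contains_hyperplane (n : ℕ) (hn : 2 ≤ n)
    (V : AddSubgroup (Fin n → ZMod 2))
    (hV : ∀ σ : Equiv.Perm (Fin n), ∀ v ∈ V, (fun i => v (σ⁻¹ i)) ∈ V)
    (i j : Fin n) (hij : i ≠ j)
    (hmem : (Pi.single i (1 : ZMod 2) + Pi.single j (1 : ZMod 2)) ∈ V) :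
    ∀ v : Fin n → ZMod 2, ∑ k, v k = 0 → v ∈ V := by
  have pairmem : ∀ a b : Fin n, a ≠ b →
      (Pi.single a (1 : ZMod 2) + Pi.single b (1 : ZMod 2)) ∈ V := by
    intro a b hab
    set σ₁ : Equiv.Perm (Fin n) := Equiv.swap i a with hσ₁
    have h1 : σ₁ i = a := Equiv.swap_apply_left i a
    have hja : σ₁ j ≠ a := by
      intro h
      exact hij (σ₁.injective (h1.trans h.symm))
    set π : Equiv.Perm (Fin n) := σ₁.trans (Equiv.swap (σ₁ j) b) with hπ
    have hπi : π i = a := by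
      simp only [hπ, Equiv.trans_apply, h1]
      exact Equiv.swap_apply_of_ne_of_ne (Ne.symm hja) hab
    have hπj : π j = b := by
      simp only [hπ, Equiv.trans_apply]
      exact Equiv.swap_apply_left _ _
    have := hV π _ hmem
    have heq : (fun k => ((Pi.single i (1 : ZMod 2) + Pi.single j (1 : ZMod 2)) : Fin n → ZMod 2) (π⁻¹ k))
        = Pi.single a (1 : ZMod 2) + Pi.single b (1 : ZMod 2) := by
      funext k
      have e1 : (π⁻¹ k = i) = (k = a) := by
        rw [← hπi]
        exact propext ⟨fun h => by rw [← h]; exact (Equiv.apply_symm_apply π _).symm,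
          fun h => by rw [h]; exact Equiv.symm_apply_apply π _⟩
      have e2 : (π⁻¹ k = j) = (k = b) := by
        rw [← hπj]
        exact propext ⟨fun h => by rw [← h]; exact (Equiv.apply_symm_apply π _).symm,
          fun h => by rw [h]; exact Equiv.symm_apply_apply π _⟩
      simp only [Pi.add_apply, Pi.single_apply, e1, e2]
    rwa [heq] at this
  have key : ∀ m : ℕ, ∀ v : Fin n → ZMod 2,
      (Finset.univ.filter (fun k => v k = 1)).card = m → ∑ k, v k = 0 → v ∈ V := by
    intro m
    induction m using Nat.strong_induction_on with
    | _ m ih =>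
      intro v hcard hsum
      have h01 : ∀ x : ZMod 2, x = 0 ∨ x = 1 := by decide
      have hsum' : ∑ k, v k = (m : ZMod 2) := by
        rw [← hcard, Finset.card_filter]
        rw [Nat.cast_sum]
        apply Finset.sum_congr rfl
        intro k _
        rcases h01 (v k) with h | h <;> simp [h]
      rcases Nat.eq_zero_or_pos m with hm | hm
      · subst hm
        have hv0 : v = 0 := by
          funext k
          rcases h01 (v k) with h | h
          · exact h
          · exfalso
            have : k ∈ Finset.univ.filter (fun k => v k = 1) := by simp [h]
            rw [Finset.card_eq_zero.mp hcard] at this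
            exact absurd this (Finset.notMem_empty k)
        rw [hv0]; exact V.zero_mem
      · -- m is even and positive, so m ≥ 2
        have hdvd : (2 : ℕ) ∣ m := by
          have : ((m : ℤ) : ZMod 2) = 0 := by push_cast; rw [← hsum']; exact hsum
          have := (ZMod.intCast_zmod_eq_zero_iff_dvd m 2).mp this
          exact_mod_cast this
        set s := Finset.univ.filter (fun k => v k = 1) with hs
        have hm2 : 2 ≤ m := by omega
        obtain ⟨a, ha⟩ := Finset.card_pos.mp (by omega : 0 < s.card)
        have : 0 < (s.erase a).card := by
          rw [Finset.card_erase_of_mem ha]; omega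
        obtain ⟨b, hb⟩ := Finset.card_pos.mp this
        have hab : a ≠ b := fun h => (Finset.mem_erase.mp hb).1 h.symm
        have hbs : b ∈ s := (Finset.mem_erase.mp hb).2
        have hva : v a = 1 := (Finset.mem_filter.mp ha).2
        have hvb : v b = 1 := (Finset.mem_filter.mp hbs).2
        set w := v - (Pi.single a (1 : ZMod 2) + Pi.single b (1 : ZMod 2)) with hw
        have hwv : ∀ k, k ≠ a → k ≠ b → w k = v k := by
          intro k hka hkb
          simp [hw, Pi.single_apply, hka, hkb]
        have hwa : w a = 0 := by
          simp [hw, Pi.single_apply, hab, hva]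
        have hwb : w b = 0 := by
          simp [hw, Pi.single_apply, hab.symm, Ne.symm hab, hvb]
        have hfilter : (Finset.univ.filter (fun k => w k = 1)) = (s.erase a).erase b := by
          ext k
          simp only [Finset.mem_filter, Finset.mem_univ, true_and, Finset.mem_erase, hs]
          constructor
          · intro hk
            have hka : k ≠ a := fun h => by rw [h, hwa] at hk; exact absurd hk (by decide)
            have hkb : k ≠ b := fun h => by rw [h, hwb] at hk; exact absurd hk (by decide)
            exact ⟨hkb, hka, by rw [← hwv k hka hkb]; exact hk⟩
          · rintro ⟨hkb, hka, hk⟩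
            rw [hwv k hka hkb]; exact hk
        have hwcard : (Finset.univ.filter (fun k => w k = 1)).card = m - 2 := by
          rw [hfilter, Finset.card_erase_of_mem hb, Finset.card_erase_of_mem ha, hcard]
          omega
        have hwsum : ∑ k, w k = 0 := by
          have hsplit : ∑ k, w k = (∑ k, v k) -
              ((∑ k, Pi.single a (1 : ZMod 2) k) + ∑ k, Pi.single b (1 : ZMod 2) k) := by
            rw [← Finset.sum_add_distrib, ← Finset.sum_sub_distrib]
            exact Finset.sum_congr rfl fun k _ => by simp [hw]
          rw [hsplit, hsum, Finset.sum_pi_single', Finset.sum_pi_single']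
          simp only [Finset.mem_univ, if_true]
          decide
        have hwmem : w ∈ V := ih (m - 2) (by omega) w hwcard hwsum
        have : w + (Pi.single a (1 : ZMod 2) + Pi.single b (1 : ZMod 2)) ∈ V :=
          V.add_mem hwmem (pairmem a b hab)
        simpa [hw] using this
  intro v hv
  exact key _ v rfl hv
end

section
/- Assume n ≥ 3. The subgroups H' of the hypercube group G with H ≤ H' ≤ G are exactly the four subgroups H, H₁ := {0, e} ⋊ H, H₂ := e^⊥ ⋊ H, and G itself; these four subgroups are pairwise distinct, and the indices satisfy [H₁ : H] = 2 and [G : H₂] = 2. -/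
open SemidirectProduct

/-- For an `H`-invariant subgroup `V` of `K`, the subgroup `V ⋊ H` of the semidirect
product `K ⋊[φ] H`, consisting of all products `inl v * inr h` with `v ∈ V`, `h ∈ H`. -/
def sdProdSubgroup {K H : Type*} [Group K] [Group H] (φ : H →* MulAut K)
    (V : Subgroup K) (hV : ∀ h : H, ∀ v ∈ V, φ h v ∈ V) : Subgroup (K ⋊[φ] H) where
  carrier := {g | ∃ v ∈ V, ∃ h : H, g = inl v * inr h}
  one_mem' := ⟨1, one_mem V, 1, by simp⟩
  mul_mem' := by
    rintro a b ⟨v₁, hv₁, h₁, rfl⟩ ⟨v₂, hv₂, h₂, rfl⟩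
    refine ⟨v₁ * φ h₁ v₂, mul_mem hv₁ (hV h₁ v₂ hv₂), h₁ * h₂, ?_⟩
    ext <;> simp
  inv_mem' := by
    rintro a ⟨v, hv, h, rfl⟩
    refine ⟨φ h⁻¹ v⁻¹, hV h⁻¹ v⁻¹ (inv_mem hv), h⁻¹, ?_⟩
    ext <;> simp

/-- The additive automorphism of `(ℤ/2ℤ)^n` given by permuting coordinates:
`(σ • v) i = v (σ⁻¹ i)`. -/
def permAddAut (n : ℕ) (σ : Equiv.Perm (Fin n)) :
    (Fin n → ZMod 2) ≃+ (Fin n → ZMod 2) where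
  toFun v := fun i => v (σ⁻¹ i)
  invFun v := fun i => v (σ i)
  left_inv v := by funext i; simp
  right_inv v := by funext i; simp
  map_add' v w := rfl

/-- The action of `S_n` on `K = (ℤ/2ℤ)^n` (written multiplicatively) by permuting
coordinates. -/
def permAction (n : ℕ) :
    Equiv.Perm (Fin n) →* MulAut (Multiplicative (Fin n → ZMod 2)) where
  toFun σ := AddEquiv.toMultiplicative (permAddAut n σ)
  map_one' := by ext v; rfl
  map_mul' σ τ := by ext v; rfl

/-- The group of the hypercube `G = K ⋊ H`, `K = (ℤ/2ℤ)^n`, `H = S_n`. -/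
abbrev HypercubeGroup (n : ℕ) :=
  Multiplicative (Fin n → ZMod 2) ⋊[permAction n] Equiv.Perm (Fin n)

/-- The subgroup `{0, e}` of `K`, generated by the all-ones vector `e`, viewed
multiplicatively. -/
def eSubgroup (n : ℕ) : Subgroup (Multiplicative (Fin n → ZMod 2)) :=
  AddSubgroup.toSubgroup (AddSubgroup.closure {(fun _ => 1 : Fin n → ZMod 2)})

/-- The hyperplane `e^⊥ = {v | ∑ i, v i = 0}` of `K`, viewed multiplicatively. -/
def ePerp (n : ℕ) : Subgroup (Multiplicative (Fin n → ZMod 2)) :=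
  AddSubgroup.toSubgroup (∑ i : Fin n, Pi.evalAddMonoidHom (fun _ : Fin n => ZMod 2) i).ker

lemma eSubgroup_invariant (n : ℕ) :
    ∀ σ : Equiv.Perm (Fin n), ∀ v ∈ eSubgroup n, permAction n σ v ∈ eSubgroup n := by
  intro σ v hv
  have hv' : Multiplicative.toAdd v ∈
      AddSubgroup.closure {(fun _ => 1 : Fin n → ZMod 2)} := hv
  have key : (AddSubgroup.closure {(fun _ => 1 : Fin n → ZMod 2)}).map
      (permAddAut n σ).toAddMonoidHom
      = AddSubgroup.closure {(fun _ => 1 : Fin n → ZMod 2)} := by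
    rw [AddMonoidHom.map_closure]
    congr 1
    rw [Set.image_singleton]
    congr 1
  have : (permAddAut n σ) (Multiplicative.toAdd v) ∈
      (AddSubgroup.closure {(fun _ => 1 : Fin n → ZMod 2)}).map
        (permAddAut n σ).toAddMonoidHom := ⟨_, hv', rfl⟩
  rw [key] at this
  exact this

lemma ePerp_invariant (n : ℕ) :
    ∀ σ : Equiv.Perm (Fin n), ∀ v ∈ ePerp n, permAction n σ v ∈ ePerp n := by
  intro σ v hv
  have hv2 : Multiplicative.toAdd v ∈
      (∑ i : Fin n, Pi.evalAddMonoidHom (fun _ : Fin n => ZMod 2) i).ker := hv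
  have hv' : ∑ i, Multiplicative.toAdd v i = 0 := by
    simpa [AddMonoidHom.mem_ker] using hv2
  show Multiplicative.toAdd (permAction n σ v) ∈
      (∑ i : Fin n, Pi.evalAddMonoidHom (fun _ : Fin n => ZMod 2) i).ker
  simp only [AddMonoidHom.mem_ker]
  have : ∑ i, Multiplicative.toAdd v (σ⁻¹ i) = 0 := by
    rw [Equiv.sum_comp σ⁻¹ (fun i => Multiplicative.toAdd v i)]
    exact hv'
  simpa [permAction, permAddAut] using this


section Helpers

open Multiplicative

lemma zmod2_cases (a : ZMod 2) : a = 0 ∨ a = 1 := by revert a; decide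

lemma zmod2_self_add (a : ZMod 2) : a + a = 0 := by revert a; decide

abbrev eVec (n : ℕ) : Fin n → ZMod 2 := fun _ => 1

lemma mem_eSubgroup {n : ℕ} (v : Multiplicative (Fin n → ZMod 2)) :
    v ∈ eSubgroup n ↔ toAdd v = 0 ∨ toAdd v = eVec n := by
  show toAdd v ∈ AddSubgroup.closure {eVec n} ↔ _
  rw [AddSubgroup.mem_closure_singleton]
  constructor
  · rintro ⟨k, rfl⟩
    rcases Int.even_or_odd k with ⟨m, rfl⟩ | ⟨m, rfl⟩
    · left; funext i; show ((m + m : ℤ) • (1:ZMod 2)) = 0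
      simp [add_smul, zmod2_self_add]
    · right; funext i; show ((2*m+1 : ℤ) • (1:ZMod 2)) = 1
      rw [add_smul, mul_smul]
      simp [zmod2_self_add, two_smul]
  · rintro (h | h)
    · exact ⟨0, by simp [h]⟩
    · exact ⟨1, by simp [h]⟩

lemma mem_ePerp {n : ℕ} (v : Multiplicative (Fin n → ZMod 2)) :
    v ∈ ePerp n ↔ ∑ i, toAdd v i = 0 := by
  show toAdd v ∈ AddMonoidHom.ker _ ↔ _
  simp [AddMonoidHom.mem_ker]

lemma mem_sdP {K H : Type*} [Group K] [Group H] (φ : H →* MulAut K)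
    (V : Subgroup K) (hV : ∀ h : H, ∀ v ∈ V, φ h v ∈ V) (g : K ⋊[φ] H) :
    g ∈ sdProdSubgroup φ V hV ↔ g.left ∈ V := by
  constructor
  · rintro ⟨v, hv, h, rfl⟩; simpa using hv
  · intro h
    exact ⟨g.left, h, g.right, (inl_left_mul_inr_right g).symm⟩

lemma mem_inr_range {K H : Type*} [Group K] [Group H] {φ : H →* MulAut K}
    (g : K ⋊[φ] H) : g ∈ (inr (φ := φ)).range ↔ g.left = 1 := by
  constructor
  · rintro ⟨h, rfl⟩; simp
  · intro h
    exact ⟨g.right, by rw [← inl_left_mul_inr_right g, h]; simp⟩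

lemma permAction_apply {n : ℕ} (σ : Equiv.Perm (Fin n))
    (v : Multiplicative (Fin n → ZMod 2)) :
    permAction n σ v = ofAdd (fun i => toAdd v (σ⁻¹ i)) := rfl

lemma hypercube_classify (n : ℕ) (V : Subgroup (Multiplicative (Fin n → ZMod 2)))
    (hV : ∀ σ : Equiv.Perm (Fin n), ∀ v ∈ V, permAction n σ v ∈ V) :
    V = ⊥ ∨ V = eSubgroup n ∨ V = ePerp n ∨ V = ⊤ := by
  by_cases hA : ∀ v ∈ V, toAdd v = 0 ∨ toAdd v = eVec n
  · by_cases he : ofAdd (eVec n) ∈ V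
    · right; left
      ext v
      rw [mem_eSubgroup]
      constructor
      · exact hA v
      · rintro (h | h)
        · have hv : v = 1 := by
            have := congrArg ofAdd h; simpa using this
          rw [hv]; exact one_mem V
        · have hv : v = ofAdd (eVec n) := congrArg ofAdd h
          rw [hv]; exact he
    · left
      ext v; rw [Subgroup.mem_bot]
      constructor
      · intro hv
        rcases hA v hv with h | h
        · have := congrArg ofAdd h; simpa using this
        · have hv' : v = ofAdd (eVec n) := congrArg ofAdd h
          rw [hv'] at hv; exact absurd hv he
      · rintro rfl; exact one_mem V
  · push_neg at hA
    obtain ⟨v, hvV, hv0, hve⟩ := hA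
    obtain ⟨i, hi⟩ : ∃ i, toAdd v i = 1 := by
      rcases Function.ne_iff.1 hv0 with ⟨i, hi⟩
      exact ⟨i, (zmod2_cases _).resolve_left hi⟩
    obtain ⟨j, hj⟩ : ∃ j, toAdd v j = 0 := by
      rcases Function.ne_iff.1 hve with ⟨j, hj⟩
      exact ⟨j, (zmod2_cases _).resolve_right hj⟩
    have hij : i ≠ j := fun h => by rw [h, hj] at hi; exact one_ne_zero hi.symm
    -- the ‹pair› vector e_i + e_j lies in V
    have hpair0 : ofAdd (Pi.single i (1:ZMod 2) + Pi.single j 1) ∈ V := by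
      have h1 : v * permAction n (Equiv.swap i j) v ∈ V := mul_mem hvV (hV _ v hvV)
      have h2 : v * permAction n (Equiv.swap i j) v
          = ofAdd (Pi.single i (1:ZMod 2) + Pi.single j 1) := by
        rw [permAction_apply, Equiv.swap_inv]
        apply Multiplicative.toAdd.injective
        funext k
        show toAdd v k + toAdd v (Equiv.swap i j k) = _
        rcases eq_or_ne k i with rfl | hki
        · rw [Equiv.swap_apply_left]
          simp [Pi.single_apply, hij, hi, hj]
        · rcases eq_or_ne k j with rfl | hkj
          · rw [Equiv.swap_apply_right]
            simp [Pi.single_apply, hij.symm, hi, hj, add_comm]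
          · rw [Equiv.swap_apply_of_ne_of_ne hki hkj]
            simp [Pi.single_apply, hki, hkj, zmod2_self_add]
      rw [← h2]; exact h1
    have hpair : ∀ i' j' : Fin n, i' ≠ j' →
        ofAdd (Pi.single i' (1:ZMod 2) + Pi.single j' 1) ∈ V := by
      intro i' j' hij'
      obtain ⟨σ, hσi, hσj⟩ : ∃ σ : Equiv.Perm (Fin n), σ i = i' ∧ σ j = j' := by
        refine ⟨(Equiv.swap (Equiv.swap i i' j) j') * Equiv.swap i i', ?_, ?_⟩
        · show Equiv.swap (Equiv.swap i i' j) j' (Equiv.swap i i' i) = i'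
          rw [Equiv.swap_apply_left]
          refine Equiv.swap_apply_of_ne_of_ne ?_ hij'
          intro h
          exact hij ((Equiv.swap i i').injective ((Equiv.swap_apply_left i i').trans h))
        · show Equiv.swap (Equiv.swap i i' j) j' (Equiv.swap i i' j) = j'
          rw [Equiv.swap_apply_left]
      have hm := hV σ _ hpair0
      have heq : permAction n σ (ofAdd (Pi.single i (1:ZMod 2) + Pi.single j 1))
          = ofAdd (Pi.single i' (1:ZMod 2) + Pi.single j' 1) := by
        rw [permAction_apply]
        apply Multiplicative.toAdd.injective
        funext k
        show (Pi.single i 1 + Pi.single j 1 : Fin n → ZMod 2) (σ⁻¹ k)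
            = (Pi.single i' 1 + Pi.single j' 1 : Fin n → ZMod 2) k
        simp only [Pi.add_apply, Pi.single_apply, Equiv.Perm.inv_eq_iff_eq, hσi, hσj]
      rwa [heq] at hm
    -- the additive subgroup corresponding to V
    let W : AddSubgroup (Fin n → ZMod 2) :=
      { carrier := {u | ofAdd u ∈ V}
        zero_mem' := one_mem V
        add_mem' := fun {a b} ha hb =>
          (mul_mem (show ofAdd a ∈ V from ha) (show ofAdd b ∈ V from hb) : ofAdd a * ofAdd b ∈ V)
        neg_mem' := fun {x} hx => (inv_mem (show ofAdd x ∈ V from hx) : (ofAdd x)⁻¹ ∈ V) }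
    have hPerp : ∀ u : Fin n → ZMod 2, ∑ k, u k = 0 → ofAdd u ∈ V := by
      intro u hsum
      have hrepr : u = ∑ k, u k • (Pi.single i (1:ZMod 2) + Pi.single k 1) := by
        funext m
        simp only [Finset.sum_apply, Pi.smul_apply, Pi.add_apply, smul_eq_mul, mul_add]
        rw [Finset.sum_add_distrib]
        have h1 : ∑ k, u k * (Pi.single i 1 : Fin n → ZMod 2) m
            = (∑ k, u k) * (Pi.single i 1 : Fin n → ZMod 2) m := by
          rw [Finset.sum_mul]
        have h2 : ∑ k, u k * (Pi.single k 1 : Fin n → ZMod 2) m = u m := by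
          rw [Finset.sum_congr rfl (fun k _ => ?_), Finset.sum_ite_eq' Finset.univ m u]
          · simp
          · show u k * (Pi.single k 1 : Fin n → ZMod 2) m = if k = m then u k else 0
            rcases eq_or_ne k m with rfl | hkm
            · simp
            · simp [Pi.single_apply, hkm, Ne.symm hkm]
        rw [h1, h2, hsum, zero_mul, zero_add]
      have hmem : u ∈ W := by
        rw [hrepr]
        refine AddSubgroup.sum_mem W (fun k _ => ?_)
        rcases zmod2_cases (u k) with h | h
        · rw [h, zero_smul]; exact W.zero_mem
        · rw [h, one_smul]
          rcases eq_or_ne i k with rfl | hik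
          · have : (Pi.single i 1 + Pi.single i 1 : Fin n → ZMod 2) = 0 := by
              funext m; exact zmod2_self_add _
            rw [this]; exact W.zero_mem
          · exact hpair i k hik
      exact hmem
    by_cases htop : ∀ u ∈ V, ∑ k, toAdd u k = 0
    · right; right; left
      ext w; rw [mem_ePerp]
      exact ⟨htop w, fun h => hPerp _ h⟩
    · right; right; right
      push_neg at htop
      obtain ⟨u₀, hu₀V, hu₀⟩ := htop
      rw [eq_top_iff]; intro g _
      by_cases hg : ∑ k, toAdd g k = 0
      · exact hPerp _ hg
      · have h1 : ∑ k, (toAdd g k + toAdd u₀ k) = 0 := by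
          rw [Finset.sum_add_distrib,
            (zmod2_cases _).resolve_left hg, (zmod2_cases _).resolve_left hu₀]
          exact zmod2_self_add 1
        have h2 : g * u₀ ∈ V := hPerp _ h1
        have h3 := mul_mem h2 (inv_mem hu₀V)
        simpa using h3
  
lemma permAction_fix {n : ℕ} (σ : Equiv.Perm (Fin n)) {v : Multiplicative (Fin n → ZMod 2)}
    (hv : v ∈ eSubgroup n) : permAction n σ v = v := by
  have hc : ∀ a b : Fin n, toAdd v a = toAdd v b := by
    rcases (mem_eSubgroup v).1 hv with h | h <;> simp [h]
  rw [permAction_apply]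
  apply Multiplicative.toAdd.injective
  funext k
  exact hc (σ⁻¹ k) k

end Helpers

/-- For `n ≥ 3`, the subgroups `H'` of the hypercube group `G = K ⋊ H`
with `H ≤ H' ≤ G` are exactly the four subgroups `H`, `H₁ = {0,e} ⋊ H`, `H₂ = e^⊥ ⋊ H`
and `G`; these four subgroups are pairwise distinct, and the indices satisfy
`[H₁ : H] = 2` and `[G : H₂] = 2`. -/
theorem hypercube_intermediate_subgroups (n : ℕ) (hn : 3 ≤ n) :
    let HH : Subgroup (HypercubeGroup n) := SemidirectProduct.inr.range
    let H₁ : Subgroup (HypercubeGroup n) :=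
      sdProdSubgroup (permAction n) (eSubgroup n) (eSubgroup_invariant n)
    let H₂ : Subgroup (HypercubeGroup n) :=
      sdProdSubgroup (permAction n) (ePerp n) (ePerp_invariant n)
    (∀ H' : Subgroup (HypercubeGroup n), HH ≤ H' →
        H' = HH ∨ H' = H₁ ∨ H' = H₂ ∨ H' = ⊤) ∧
    (HH ≠ H₁ ∧ HH ≠ H₂ ∧ HH ≠ ⊤ ∧ H₁ ≠ H₂ ∧ H₁ ≠ ⊤ ∧ H₂ ≠ ⊤) ∧
    HH.relIndex H₁ = 2 ∧ H₂.index = 2 := by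
  intro HH H₁ H₂
  have h01 : (⟨0, by omega⟩ : Fin n) ≠ ⟨1, by omega⟩ := by simp [Fin.ext_iff]
  set w1 : Multiplicative (Fin n → ZMod 2) :=
    Multiplicative.ofAdd (Pi.single ⟨0, by omega⟩ 1 : Fin n → ZMod 2) with hw1
  set w2 : Multiplicative (Fin n → ZMod 2) :=
    Multiplicative.ofAdd
      (Pi.single ⟨0, by omega⟩ 1 + Pi.single ⟨1, by omega⟩ 1 : Fin n → ZMod 2) with hw2
  have hw2sum : ∑ k, Multiplicative.toAdd w2 k = 0 := by
    rw [hw2]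
    simp only [toAdd_ofAdd, Pi.add_apply]
    rw [Finset.sum_add_distrib, Finset.sum_pi_single', Finset.sum_pi_single']
    simp [zmod2_self_add]
  have hw2perp : w2 ∈ ePerp n := (mem_ePerp w2).2 hw2sum
  have hw2ne1 : Multiplicative.toAdd w2 ≠ 0 := by
    intro h
    have := congrFun h ⟨0, by omega⟩
    simp [hw2, Pi.single_apply, Ne.symm h01] at this
  have hw2nee : Multiplicative.toAdd w2 ≠ eVec n := by
    intro h
    have := congrFun h ⟨2, by omega⟩
    have h02 : (⟨2, by omega⟩ : Fin n) ≠ ⟨0, by omega⟩ := by simp [Fin.ext_iff]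
    have h12 : (⟨2, by omega⟩ : Fin n) ≠ ⟨1, by omega⟩ := by simp [Fin.ext_iff]
    simp [hw2, Pi.single_apply, h02, h12, eVec] at this
  have hw1ne1 : Multiplicative.toAdd w1 ≠ 0 := by
    intro h
    have := congrFun h ⟨0, by omega⟩
    simp [hw1, Pi.single_apply] at this
  have hw1nee : Multiplicative.toAdd w1 ≠ eVec n := by
    intro h
    have := congrFun h ⟨1, by omega⟩
    simp [hw1, Pi.single_apply, Ne.symm h01, eVec] at this
  have hw1sum : ∑ k, Multiplicative.toAdd w1 k = 1 := by
    rw [hw1]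
    simp only [toAdd_ofAdd]
    rw [Finset.sum_pi_single']
    simp
  have hene : Multiplicative.toAdd (Multiplicative.ofAdd (eVec n)) ≠ 0 := by
    intro h
    have := congrFun h ⟨0, by omega⟩
    simp [eVec] at this
  refine ⟨?_, ⟨?_, ?_, ?_, ?_, ?_, ?_⟩, ?_, ?_⟩
  · -- classification of intermediate subgroups
    intro H' hH'
    have hV : ∀ σ : Equiv.Perm (Fin n), ∀ v ∈ H'.comap (inl : _ →* HypercubeGroup n),
        permAction n σ v ∈ H'.comap (inl : _ →* HypercubeGroup n) := by
      intro σ v hv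
      show inl (permAction n σ v) ∈ H'
      rw [inl_aut]
      exact mul_mem (mul_mem (hH' ⟨σ, rfl⟩) hv) (hH' ⟨σ⁻¹, rfl⟩)
    have hmem : ∀ g : HypercubeGroup n,
        g ∈ H' ↔ g.left ∈ H'.comap (inl : _ →* HypercubeGroup n) := by
      intro g
      constructor
      · intro hg
        show inl g.left ∈ H'
        have h2 := mul_mem hg (inv_mem (hH' ⟨g.right, rfl⟩))
        have heq : g * (inr g.right)⁻¹ = inl g.left := by
          conv_lhs => rw [← inl_left_mul_inr_right g]
          rw [mul_assoc]
          simp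
        rwa [heq] at h2
      · intro hg
        rw [← inl_left_mul_inr_right g]
        exact mul_mem hg (hH' ⟨g.right, rfl⟩)
    rcases hypercube_classify n _ hV with h | h | h | h
    · left; ext g
      rw [hmem g, h, Subgroup.mem_bot]
      exact (mem_inr_range g).symm
    · right; left; ext g
      rw [hmem g, h]
      exact (mem_sdP _ _ _ g).symm
    · right; right; left; ext g
      rw [hmem g, h]
      exact (mem_sdP _ _ _ g).symm
    · right; right; right
      rw [eq_top_iff]
      intro g _
      rw [hmem g, h]
      trivial
  · -- HH ≠ H₁
    intro h
    have h1 : inl (Multiplicative.ofAdd (eVec n)) ∈ H₁ :=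
      (mem_sdP _ _ _ _).2 (by rw [left_inl]; exact (mem_eSubgroup _).2 (Or.inr rfl))
    rw [← h] at h1
    rw [mem_inr_range, left_inl] at h1
    exact hene (by rw [h1]; rfl)
  · -- HH ≠ H₂
    intro h
    have h1 : inl w2 ∈ H₂ := (mem_sdP _ _ _ _).2 (by rw [left_inl]; exact hw2perp)
    rw [← h, mem_inr_range, left_inl] at h1
    exact hw2ne1 (by rw [h1]; rfl)
  · -- HH ≠ ⊤
    intro h
    have h1 : inl w2 ∈ (⊤ : Subgroup (HypercubeGroup n)) := trivial
    rw [← h, mem_inr_range, left_inl] at h1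
    exact hw2ne1 (by rw [h1]; rfl)
  · -- H₁ ≠ H₂
    intro h
    have h1 : inl w2 ∈ H₂ := (mem_sdP _ _ _ _).2 (by rw [left_inl]; exact hw2perp)
    rw [← h] at h1
    have h2 := (mem_sdP _ _ _ _).1 h1
    rw [left_inl, mem_eSubgroup] at h2
    exact h2.elim hw2ne1 hw2nee
  · -- H₁ ≠ ⊤
    intro h
    have h1 : inl w1 ∈ (⊤ : Subgroup (HypercubeGroup n)) := trivial
    rw [← h] at h1
    have h2 := (mem_sdP _ _ _ _).1 h1
    rw [left_inl, mem_eSubgroup] at h2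
    exact h2.elim hw1ne1 hw1nee
  · -- H₂ ≠ ⊤
    intro h
    have h1 : inl w1 ∈ (⊤ : Subgroup (HypercubeGroup n)) := trivial
    rw [← h] at h1
    have h2 := (mem_sdP _ _ _ _).1 h1
    rw [left_inl, mem_ePerp, hw1sum] at h2
    exact one_ne_zero h2
  · -- relindex
    let f₁ : H₁ →* Multiplicative (Fin n → ZMod 2) :=
      { toFun := fun x => (x : HypercubeGroup n).left
        map_one' := rfl
        map_mul' := by
          rintro ⟨x, hx⟩ ⟨y, hy⟩
          show (x * y).left = x.left * y.left
          rw [mul_left]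
          congr 1
          exact permAction_fix x.right ((mem_sdP _ _ _ y).1 hy) }
    have hker : f₁.ker = HH.subgroupOf H₁ := by
      ext x
      rw [MonoidHom.mem_ker, Subgroup.mem_subgroupOf]
      exact Iff.symm (mem_inr_range _)
    have hrange : f₁.range = eSubgroup n := by
      ext v
      constructor
      · rintro ⟨⟨x, hx⟩, rfl⟩
        exact (mem_sdP (permAction n) (eSubgroup n) (eSubgroup_invariant n) x).1 hx
      · intro hv
        exact ⟨⟨inl v, (mem_sdP (permAction n) (eSubgroup n) (eSubgroup_invariant n)
          (inl v)).2 (by rw [left_inl]; exact hv)⟩, rfl⟩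
    have hidx := Subgroup.index_ker f₁
    rw [hker, hrange] at hidx
    show (HH.subgroupOf H₁).index = 2
    rw [hidx]
    have hset : ((eSubgroup n : Subgroup _) : Set _)
        = {1, Multiplicative.ofAdd (eVec n)} := by
      ext v
      rw [SetLike.mem_coe, mem_eSubgroup, Set.mem_insert_iff, Set.mem_singleton_iff]
      constructor
      · rintro (h | h)
        · left; exact congrArg Multiplicative.ofAdd h
        · right; exact congrArg Multiplicative.ofAdd h
      · rintro (rfl | rfl)
        · left; rfl
        · right; rfl
    have hne : (1 : Multiplicative (Fin n → ZMod 2)) ≠ Multiplicative.ofAdd (eVec n) :=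
      fun h => hene (congrArg Multiplicative.toAdd h).symm
    have hcard : Nat.card ↥(eSubgroup n)
        = Nat.card ({1, Multiplicative.ofAdd (eVec n)} : Set (Multiplicative (Fin n → ZMod 2))) :=
      Nat.card_congr (Equiv.setCongr hset)
    rw [hcard, Nat.card_coe_set_eq, Set.ncard_pair hne]
  · -- index of H₂
    let f₂ : HypercubeGroup n →* Multiplicative (ZMod 2) :=
      { toFun := fun g => Multiplicative.ofAdd (∑ i, Multiplicative.toAdd g.left i)
        map_one' := by simp
        map_mul' := by
          intro a b
          show Multiplicative.ofAdd (∑ i, Multiplicative.toAdd (a * b).left i)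
              = Multiplicative.ofAdd (∑ i, Multiplicative.toAdd a.left i)
                * Multiplicative.ofAdd (∑ i, Multiplicative.toAdd b.left i)
          rw [← ofAdd_add]
          congr 1
          rw [mul_left, toAdd_mul]
          simp only [Pi.add_apply]
          rw [Finset.sum_add_distrib]
          congr 1
          rw [permAction_apply]
          simp only [toAdd_ofAdd]
          exact Equiv.sum_comp (a.right)⁻¹ (Multiplicative.toAdd b.left) }
    have hker2 : f₂.ker = H₂ := by
      ext g
      rw [MonoidHom.mem_ker]
      have hfg : f₂ g = Multiplicative.ofAdd (∑ i, Multiplicative.toAdd g.left i) := rfl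
      rw [hfg, ofAdd_eq_one]
      exact ((mem_ePerp g.left).symm).trans (mem_sdP _ _ _ g).symm
    rw [← hker2, Subgroup.index_ker]
    have hrange2 : f₂.range = ⊤ := by
      rw [MonoidHom.range_eq_top]
      intro x
      rcases zmod2_cases (Multiplicative.toAdd x) with h | h
      · refine ⟨1, ?_⟩
        have hx : x = 1 := by
          apply Multiplicative.toAdd.injective
          rw [h]; rfl
        rw [hx, map_one]
      · refine ⟨inl w1, ?_⟩
        apply Multiplicative.toAdd.injective
        rw [h]
        show Multiplicative.toAdd
            (Multiplicative.ofAdd (∑ i, Multiplicative.toAdd (inl w1 : HypercubeGroup n).left i)) = 1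
        rw [toAdd_ofAdd, left_inl]
        exact hw1sum
    rw [hrange2, Subgroup.card_top]
    rw [Nat.card_eq_fintype_card]
    rfl
end
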